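/- (Perfect Gold Standard — NPV) Under assumptions (A1), (A2), (A4) and the testing logic, if the established test has perfect sensitivity σ = 1, then for every distribution consistent with the data the new test's negative predictive value is point-identified: P(x=0|z=0,t=1) = P(y=0|z=0,t=1). -/
import Mathlib


/-!
Population model: a pmf `P` on `{0,1}^4` over `(x, y, z, t)` where `x = true` means truly
infected, `y` is the established test result, `z` the new test result, and `t = true` means
the person belongs to the testing pool.  The testing logic requires `z = 1 → t = 1`.
-/

namespace PaperTest

abbrev Dist := Bool → Bool → Bool → Bool → ℝ

/-- Probability of the event `A` under `P`. -/
noncomputable def pr (P : Dist) (A : Bool → Bool → Bool → Bool → Bool) : ℝ :=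
  ∑ x : Bool, ∑ y : Bool, ∑ z : Bool, ∑ t : Bool, if A x y z t then P x y z t else 0

/-- Conditional probability `P(A | B)`. -/
noncomputable def cpr (P : Dist) (A B : Bool → Bool → Bool → Bool → Bool) : ℝ :=
  pr P (fun x y z t => A x y z t && B x y z t) / pr P B

def IsPMF (P : Dist) : Prop :=
  (∀ x y z t, 0 ≤ P x y z t) ∧
    (∑ x : Bool, ∑ y : Bool, ∑ z : Bool, ∑ t : Bool, P x y z t) = 1

/-- Testing logic: `z = 1` implies `t = 1`, i.e. there is no mass on `z = 1 ∧ t = 0`. -/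
def TestLogic (P : Dist) : Prop := ∀ x y, P x y true false = 0

/-- Prevalence `p = P(x=1)`. -/
noncomputable def prev (P : Dist) : ℝ := pr P fun x _ _ _ => x

/-- Sensitivity of the established test, `σ = P(y=1 | x=1)`. -/
noncomputable def sens (P : Dist) : ℝ := cpr P (fun _ y _ _ => y) (fun x _ _ _ => x)

/-- `τ = P(t=1)`. -/
noncomputable def tau (P : Dist) : ℝ := pr P fun _ _ _ t => t

/-- `γ = P(y=1 | t=1)`. -/
noncomputable def gamma (P : Dist) : ℝ := cpr P (fun _ y _ _ => y) (fun _ _ _ t => t)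

/-- `ζ = P(z=1 | t=1)`. -/
noncomputable def zeta (P : Dist) : ℝ := cpr P (fun _ _ z _ => z) (fun _ _ _ t => t)

/-- `χ̄ = γ/σ`, the prevalence in the testing pool. -/
noncomputable def chibar (P : Dist) : ℝ := gamma P / sens P

/-- (A1) non-trivial prevalence. -/
def A1 (P : Dist) : Prop := 0 < prev P ∧ prev P < 1

/-- (A2) no false positives for the established test: `P(x=0, y=1) = 0`. -/
def A2 (P : Dist) : Prop := pr P (fun x y _ _ => !x && y) = 0

/-- (A3) test monotonicity: `P(x=1 | t=1) ≥ P(x=1 | t=0)`. -/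
def A3 (P : Dist) : Prop :=
  cpr P (fun x _ _ _ => x) (fun _ _ _ t => t) ≥ cpr P (fun x _ _ _ => x) (fun _ _ _ t => !t)

/-- (A4) health sufficiency: `P(y=1 | x=1, t=1) = P(y=1 | x=1) = σ`. -/
def A4 (P : Dist) : Prop := cpr P (fun _ y _ _ => y) (fun x _ _ t => x && t) = sens P

/-- `P(y=1, z=1 | t=1)`. -/
noncomputable def q11 (P : Dist) : ℝ := cpr P (fun _ y z _ => y && z) (fun _ _ _ t => t)

/-- `P(y=1, z=0 | t=1)`. -/
noncomputable def q10 (P : Dist) : ℝ := cpr P (fun _ y z _ => y && !z) (fun _ _ _ t => t)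

/-- `P(y=0, z=1 | t=1)`. -/
noncomputable def q01 (P : Dist) : ℝ := cpr P (fun _ y z _ => !y && z) (fun _ _ _ t => t)

/-- `P(y=0, z=0 | t=1)`. -/
noncomputable def q00 (P : Dist) : ℝ := cpr P (fun _ y z _ => !y && !z) (fun _ _ _ t => t)

/-- `Q` induces the same conditional data distribution `P(y, z | t=1)` and the same
sensitivity `σ` of the established test as `P`. -/
def SameData (P Q : Dist) : Prop :=
  (∀ y0 z0 : Bool,
      cpr Q (fun _ y z _ => (y == y0) && (z == z0)) (fun _ _ _ t => t) =
        cpr P (fun _ y z _ => (y == y0) && (z == z0)) (fun _ _ _ t => t)) ∧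
    sens Q = sens P

/-- Assumptions (A1), (A2), (A4), the testing logic, and the maintained regularity
conditions `γ > 0`, `0 < ζ < 1`, and `P(t=1) > 0`. -/
def Setup (P : Dist) : Prop :=
  IsPMF P ∧ TestLogic P ∧ A1 P ∧ A2 P ∧ A4 P ∧
    0 < gamma P ∧ 0 < zeta P ∧ zeta P < 1 ∧ 0 < tau P

/-- `Q` is consistent with the data of `P`: it satisfies all assumptions and induces the
same `P(y, z | t=1)` and the same `σ`. -/
def Consistent (P Q : Dist) : Prop := Setup Q ∧ SameData P Q


/-- Auxiliary: A2 forces pointwise zeros. -/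
lemma aux_noFP (Q : Dist) (hnn : ∀ x y z t, 0 ≤ Q x y z t) (h2 : A2 Q) :
    ∀ z t, Q false true z t = 0 := by
  simp [A2, pr, Fintype.sum_bool] at h2
  intro z t
  have a := hnn false true false false
  have b := hnn false true false true
  have c := hnn false true true false
  have d := hnn false true true true
  cases z <;> cases t <;> linarith

/-- Auxiliary: perfect sensitivity forces pointwise zeros. -/
lemma aux_sensOne (Q : Dist) (hnn : ∀ x y z t, 0 ≤ Q x y z t) (hprev : 0 < prev Q)
    (hs : sens Q = 1) : ∀ z t, Q true false z t = 0 := by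
  have hp : pr Q (fun x _ _ _ => x) ≠ 0 := ne_of_gt hprev
  rw [sens, cpr, div_eq_one_iff_eq hp] at hs
  simp [pr, Fintype.sum_bool] at hs
  intro z t
  have a := hnn true false false false
  have b := hnn true false false true
  have c := hnn true false true false
  have d := hnn true false true true
  cases z <;> cases t <;> linarith

/-- Auxiliary algebra. -/
lemma aux_ratio (A B a' b' τ τ' : ℝ) (hτ : 0 < τ) (h1 : A * τ' = a' * τ)
    (h2 : B * τ' = b' * τ) (hD : 0 < A + B) (hD' : 0 < a' + b') :
    A / (A + B) = a' / (a' + b') := by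
  rw [div_eq_div_iff hD.ne' hD'.ne']
  have key : A * b' = a' * B :=
    mul_right_cancel₀ hτ.ne' (by linear_combination B * h1 - A * h2)
  linear_combination key

/-- Perfect Gold Standard — NPV: if the established test has perfect
sensitivity `σ = 1`, then for every distribution consistent with the data the new test's
negative predictive value is point-identified: `P(x=0 | z=0, t=1) = P(y=0 | z=0, t=1)`. -/
theorem statement10 (P : Dist) (h : Setup P) (hσ : sens P = 1) :
    ∀ Q : Dist, Consistent P Q →
      cpr Q (fun x _ _ _ => !x) (fun _ _ z t => !z && t) =
        cpr P (fun _ y _ _ => !y) (fun _ _ z t => !z && t) := by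
  intro Q hc
  obtain ⟨hQset, hsdq, hsds⟩ := hc
  obtain ⟨⟨hQnn, _⟩, hQtl, hQ1, hQ2, _hQ4, _hg, _hz0, hQz1, hQτ⟩ := hQset
  obtain ⟨⟨hPnn, _⟩, hPtl, hP1, hP2, _, _, _, hPz1, hPτ⟩ := h
  have hQs : sens Q = 1 := by rw [hsds, hσ]
  have hA2Q : ∀ z t, Q false true z t = 0 := aux_noFP Q hQnn hQ2
  have hSQ : ∀ z t, Q true false z t = 0 := aux_sensOne Q hQnn hQ1.1 hQs
  -- tau positivity, expanded
  rw [tau, pr] at hQτ hPτ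
  simp only [Fintype.sum_bool] at hQτ hPτ
  simp only [if_true, if_false, ite_true, ite_false, add_zero, zero_add] at hQτ hPτ
  -- zeta < 1 : pr(z ∧ t) < tau
  have hzQ : pr Q (fun _ _ z t => z && t) < pr Q (fun _ _ _ t => t) := by
    have h1 := hQz1
    rw [zeta, cpr, div_lt_one (by rw [pr]; simpa using hQτ)] at h1
    exact h1
  have hzP : pr P (fun _ _ z t => z && t) < pr P (fun _ _ _ t => t) := by
    have h1 := hPz1
    rw [zeta, cpr, div_lt_one (by rw [pr]; simpa using hPτ)] at h1
    exact h1
  simp [pr, Fintype.sum_bool] at hzQ hzP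
  -- denominators positive
  have hDQ : 0 < Q false false false true + Q true true false true := by
    have a := hA2Q true true; have b := hA2Q false true
    have c := hSQ true true; have d := hSQ false true
    linarith
  have hDP : 0 < (P false false false true + P true false false true) +
      (P false true false true + P true true false true) := by linarith
  -- SameData equations, cross multiplied
  have hq1 := hsdq false false
  have hq2 := hsdq true false
  simp only [cpr] at hq1 hq2
  have fQ1 : pr Q (fun _ y z t => ((y == false) && (z == false)) && t)
      = Q false false false true := by
    simp [pr, Fintype.sum_bool, hSQ]
  have fQ2 : pr Q (fun _ y z t => ((y == true) && (z == false)) && t)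
      = Q true true false true := by
    simp [pr, Fintype.sum_bool, hA2Q]
  have fP1 : pr P (fun _ y z t => ((y == false) && (z == false)) && t)
      = P false false false true + P true false false true := by
    simp [pr, Fintype.sum_bool]
    ring
  have fP2 : pr P (fun _ y z t => ((y == true) && (z == false)) && t)
      = P false true false true + P true true false true := by
    simp [pr, Fintype.sum_bool]
    ring
  have gQ : pr Q (fun _ _ _ t => t) ≠ 0 := by
    rw [pr]; simp only [Fintype.sum_bool]; intro hcon
    simp only [if_true, if_false, ite_true, ite_false, add_zero, zero_add] at hcon
    linarith
  have gP : pr P (fun _ _ _ t => t) ≠ 0 := by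
    rw [pr]; simp only [Fintype.sum_bool]; intro hcon
    simp only [if_true, if_false, ite_true, ite_false, add_zero, zero_add] at hcon
    linarith
  rw [fQ1, fP1, div_eq_div_iff gQ gP] at hq1
  rw [fQ2, fP2, div_eq_div_iff gQ gP] at hq2
  have hτQpos : 0 < pr Q (fun _ _ _ t => t) := by
    rw [pr]; simp only [Fintype.sum_bool]; simpa using hQτ
  -- rewrite the goal
  simp only [cpr]
  have e1 : pr Q (fun x _ z t => !x && (!z && t)) = Q false false false true := by
    simp [pr, Fintype.sum_bool, hA2Q]
  have e2 : pr Q (fun _ _ z t => !z && t)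
      = Q false false false true + Q true true false true := by
    simp [pr, Fintype.sum_bool, hA2Q, hSQ]
    ring
  have e3 : pr P (fun _ y z t => !y && (!z && t))
      = P false false false true + P true false false true := by
    simp [pr, Fintype.sum_bool]
    ring
  have e4 : pr P (fun _ _ z t => !z && t)
      = (P false false false true + P true false false true) +
        (P false true false true + P true true false true) := by
    simp [pr, Fintype.sum_bool]
    ring
  rw [e1, e2, e3, e4]
  exact aux_ratio _ _ _ _ _ _ hτQpos hq1 hq2 hDQ hDP

end PaperTest
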